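/- The sequence e_i^- := F̄(i)/(α π_{i−1}) is convex on i ≥ 1: for every i ≥ 1, e_{i+2}^- − 2e_{i+1}^- + e_i^- ≥ 0; equivalently, F̄(i+2)/(α π_{i+1}) − 2F̄(i+1)/(α π_i) + F̄(i)/(α π_{i−1}) ≥ 0. -/

import Mathlib

/-!
Write `c i = (i + 1)(β + i)` for the factors of the product defining `π`. Then
`π (m + j + 1) / (α π j) = α ^ m / ∏_{k ≤ m} c (j + k)`, so `e_{j+1}^-` is the series of these
terms over `m`. Each `c` is log-concave (a product of two affine sequences), hence so is every
window product `j ↦ ∏_{k ≤ m} c (j + k)`; its reciprocal is log-convex, and a log-convex positive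
sequence is convex by AM-GM. Summing over `m` gives the convexity of `e^-`.
-/

open Finset

/-- The death rate `μ_{i+1} = β (i + 1) + (i + 1) i` of the chain, indexed from `0` as in the
product defining `π`. -/
def pbdDeathRate (β : ℝ) (i : ℕ) : ℝ := β * ((i : ℝ) + 1) + ((i : ℝ) + 1) * (i : ℝ)

lemma pbdDeathRate_pos {β : ℝ} (hβ : 0 < β) (i : ℕ) : 0 < pbdDeathRate β i := by
  unfold pbdDeathRate
  positivity

lemma pbdDeathRate_mul_le_sq (β : ℝ) (i : ℕ) :
    pbdDeathRate β i * pbdDeathRate β (i + 2) ≤ pbdDeathRate β (i + 1) ^ 2 := by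
  unfold pbdDeathRate
  push_cast
  nlinarith [sq_nonneg (β + i + 1), sq_nonneg ((i : ℝ) + 2)]

lemma prod_range_mul_prod_range_le_sq {c : ℕ → ℝ} (hc : ∀ n, 0 ≤ c n)
    (hlc : ∀ n, c n * c (n + 2) ≤ c (n + 1) ^ 2) (m j : ℕ) :
    (∏ k ∈ range m, c (j + k)) * ∏ k ∈ range m, c (j + 2 + k) ≤
      (∏ k ∈ range m, c (j + 1 + k)) ^ 2 := by
  rw [← prod_mul_distrib, ← prod_pow]
  refine prod_le_prod (fun k _ => mul_nonneg (hc _) (hc _)) fun k _ => ?_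
  rw [show j + 2 + k = j + k + 2 by ring, show j + 1 + k = j + k + 1 by ring]
  exact hlc (j + k)

lemma two_mul_div_le_div_add_div {a x y z : ℝ} (ha : 0 ≤ a) (hx : 0 < x) (hz : 0 < z)
    (h : x * z ≤ y ^ 2) : 2 * (a / y) ≤ a / x + a / z := by
  refine two_mul_le_add_of_sq_le_mul (by positivity) (by positivity) ?_
  rw [div_pow, div_mul_div_comm, ← sq]
  exact div_le_div_of_nonneg_left (sq_nonneg a) (by positivity) h

lemma hasSum_ite_le {G : Type*} [AddCommGroup G] [TopologicalSpace G] [IsTopologicalAddGroup G]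
    {f : ℕ → G} {a : G} (i : ℕ) (hf : HasSum (fun m => f (m + i)) a) :
    HasSum (fun j => if i ≤ j then f j else 0) a := by
  rw [← hasSum_nat_add_iff' i]
  have hzero : ∑ j ∈ range i, (if i ≤ j then f j else 0) = 0 :=
    sum_eq_zero fun j hj => if_neg (by simpa using hj)
  simpa [hzero] using hf

section PBD

variable {α β C : ℝ} {π : ℕ → ℝ}

lemma pbd_div_eq (hα : 0 < α) (hβ : 0 < β) (hC : 0 < C)
    (hπ : ∀ n, π n = C * α ^ n / ∏ i ∈ range n, pbdDeathRate β i) (m j : ℕ) :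
    π (m + (j + 1)) / (α * π j) = α ^ m / ∏ k ∈ range (m + 1), pbdDeathRate β (j + k) := by
  have hhead : 0 < ∏ i ∈ range j, pbdDeathRate β i := prod_pos fun i _ => pbdDeathRate_pos hβ i
  have hwindow : 0 < ∏ k ∈ range (m + 1), pbdDeathRate β (j + k) :=
    prod_pos fun k _ => pbdDeathRate_pos hβ (j + k)
  rw [hπ, hπ, show m + (j + 1) = j + (m + 1) by ring, prod_range_add, pow_add, pow_add]
  field_simp

lemma pbd_hasSum_tail_div (hα : 0 < α) (hβ : 0 < β) (hC : 0 < C)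
    (hπ : ∀ n, π n = C * α ^ n / ∏ i ∈ range n, pbdDeathRate β i) (hπ1 : ∑' n, π n = 1) (j : ℕ) :
    HasSum (fun m => α ^ m / ∏ k ∈ range (m + 1), pbdDeathRate β (j + k))
      ((∑' n, if j + 1 ≤ n then π n else 0) / (α * π j)) := by
  have hsum : Summable π := by
    by_contra h
    simp [tsum_eq_zero_of_not_summable h] at hπ1
  have htail := ((summable_nat_add_iff (j + 1)).mpr hsum).hasSum
  rw [(hasSum_ite_le _ htail).tsum_eq]
  simpa only [pbd_div_eq hα hβ hC hπ] using htail.div_const (α * π j)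

end PBD

/-- convexity on `i ≥ 1` of `e_i^- = F̄(i)/(α π_{i-1})` where `F̄` is the upper tail of PBD(α;0,β,1). -/
theorem stmt_12
    (α β : ℝ) (hα : 0 < α) (hβ : 0 < β)
    (C : ℝ) (hC : 0 < C) (π : ℕ → ℝ)
    (hπ : ∀ n : ℕ, π n =
      C * α ^ n / ∏ i ∈ Finset.range n, (β * ((i : ℝ) + 1) + ((i : ℝ) + 1) * (i : ℝ)))
    (hπ1 : ∑' n, π n = 1)
    (Fbar : ℕ → ℝ) (hFbar : ∀ i : ℕ, Fbar i = ∑' j : ℕ, if i ≤ j then π j else 0)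
    :
    ∀ i : ℕ, 1 ≤ i →
      0 ≤ Fbar (i + 2) / (α * π (i + 1)) - 2 * (Fbar (i + 1) / (α * π i))
        + Fbar i / (α * π (i - 1)) := by
  intro i hi
  obtain ⟨j, rfl⟩ : ∃ j, i = j + 1 := ⟨i - 1, by omega⟩
  have hseries (s : ℕ) := hFbar (s + 1) ▸ pbd_hasSum_tail_div hα hβ hC hπ hπ1 s
  set Q : ℕ → ℕ → ℝ := fun m s => ∏ k ∈ range (m + 1), pbdDeathRate β (s + k)
  have hQ_pos (m s : ℕ) : 0 < Q m s := prod_pos fun k _ => pbdDeathRate_pos hβ (s + k)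
  have hconvex (m : ℕ) : 2 * (α ^ m / Q m (j + 1)) ≤ α ^ m / Q m j + α ^ m / Q m (j + 2) :=
    two_mul_div_le_div_add_div (by positivity) (hQ_pos m j) (hQ_pos m (j + 2))
      (prod_range_mul_prod_range_le_sq (fun n => (pbdDeathRate_pos hβ n).le)
        (pbdDeathRate_mul_le_sq β) (m + 1) j)
  have := hasSum_le hconvex ((hseries (j + 1)).mul_left 2) ((hseries j).add (hseries (j + 2)))
  simp only [Nat.add_sub_cancel]
  linarith
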